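/- For all n ≥ 0: |fⁿ(2)| ≤ |fⁿ(0)| ≤ |fⁿ(1)| ≤ 2·|fⁿ(2)|, and |τ(g(fⁿ(2)))| ≤ |τ(g(fⁿ(0)))| ≤ |τ(g(fⁿ(1)))| ≤ 2·|τ(g(fⁿ(2)))|. -/

import Mathlib

abbrev Word := List (Fin 3)
abbrev InfWord := ℕ → Fin 3

/-- `u` is a (finite, contiguous) factor of the infinite word `w`. -/
def IsFactor (w : InfWord) (u : Word) : Prop :=
  ∃ i : ℕ, u = (List.range u.length).map fun k => w (i + k)

/-- `u` is a prefix of the infinite word `z`. -/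
def IsPrefixInf (u : Word) (z : InfWord) : Prop :=
  u = (List.range u.length).map z

/-- `p` is a period of the finite word `w`. -/
def HasPeriod (w : Word) (p : ℕ) : Prop :=
  0 < p ∧ p ≤ w.length ∧ ∀ i : ℕ, i + p < w.length → w.getD (i + p) 0 = w.getD i 0

/-- The infinite word `w` is `α`-power-free: it has no nonempty factor `u`
with a period `p` satisfying `|u|/p ≥ α`. -/
def PowerFree (α : ℚ) (w : InfWord) : Prop :=
  ∀ (u : Word) (p : ℕ), IsFactor w u → u ≠ [] → HasPeriod u p →
    (u.length : ℚ) / (p : ℚ) < α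

/-- The set of palindromic factors of a finite word. -/
def palSet (w : Word) : Set Word := {u | u <:+: w ∧ u.reverse = u}

/-- A finite word of length `n` is rich if it has exactly `n + 1`
distinct palindromic factors (including the empty word). -/
def RichWord (w : Word) : Prop := (palSet w).ncard = w.length + 1

/-- An infinite word is rich if all of its finite factors are rich. -/
def RichSeq (z : InfWord) : Prop := ∀ u : Word, IsFactor z u → RichWord u

def fm : Fin 3 → Word := ![[0, 1], [0, 2, 2], [0, 2]]
def gm : Fin 3 → Word := ![[2, 0], [2, 1], [2]]
def t1 : Fin 3 → Word :=
  ![[0, 0, 1], [0, 0, 1, 0, 1, 1, 0, 1],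
    [0, 0, 1, 0, 1, 1, 0, 1, 0, 0, 1, 0, 1, 1, 0, 1]]
def t2 : Fin 3 → Word :=
  ![[0, 0, 2], [0, 0, 2, 0, 2, 2, 0, 2],
    [0, 0, 2, 0, 2, 2, 0, 2, 0, 0, 2, 0, 2, 2, 0, 2]]

/-- The morphism `f` on finite words. -/
def fList (w : Word) : Word := w.flatMap fm
/-- The morphism `g` on finite words. -/
def gList (w : Word) : Word := w.flatMap gm

def tauAux : Bool → Word → Word
  | _, [] => []
  | b, a :: w => (if b then t1 a else t2 a) ++ tauAux (!b) w

/-- The transducer `τ` on finite words: `t1` is applied to even-indexed letters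
and `t2` to odd-indexed letters. -/
def tauList (w : Word) : Word := tauAux true w

/-- The morphism `f` on infinite words. -/
def fInf (x : InfWord) : InfWord :=
  fun i => (fList ((List.range (i + 1)).map x)).getD i 0
/-- The morphism `g` on infinite words. -/
def gInf (x : InfWord) : InfWord :=
  fun i => (gList ((List.range (i + 1)).map x)).getD i 0
/-- The transducer `τ` on infinite words. -/
def tauInf (x : InfWord) : InfWord :=
  fun i => (tauList ((List.range (i + 1)).map x)).getD i 0

/-- The critical exponent of an infinite word. -/
noncomputable def criticalExponent (z : InfWord) : ℝ :=
  sSup {r : ℝ | ∃ (u : Word) (p : ℕ), IsFactor z u ∧ u ≠ [] ∧ HasPeriod u p ∧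
    r = (u.length : ℝ) / (p : ℝ)}

/-!
Any length function `L` on words that is additive under concatenation turns `f` into the linear
recurrence `L fⁿ⁺¹(0) = L fⁿ(0) + L fⁿ(1)`, `L fⁿ⁺¹(1) = L fⁿ(0) + 2 L fⁿ(2)`,
`L fⁿ⁺¹(2) = L fⁿ(0) + L fⁿ(2)`, and this recurrence preserves the chain `c ≤ a ≤ b ≤ 2c`
between `a = L fⁿ(0)`, `b = L fⁿ(1)`, `c = L fⁿ(2)`.
Both `|w|` and `|τ(g(w))|` are additive, because `t₁` and `t₂` have equal lengths on each letter,
so the parity with which `τ` reads a letter does not affect the length of its image.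
-/

lemma fList_append (u v : Word) : fList (u ++ v) = fList u ++ fList v :=
  List.flatMap_append

lemma fList_iterate_append (n : ℕ) (u v : Word) :
    fList^[n] (u ++ v) = fList^[n] u ++ fList^[n] v := by
  induction n generalizing u v with
  | zero => rfl
  | succ n ih => simp only [Function.iterate_succ_apply, fList_append, ih]

lemma length_tauAux (b : Bool) (w : Word) :
    (tauAux b w).length = (w.map fun a => (t1 a).length).sum := by
  induction w generalizing b with
  | nil => rfl
  | cons a w ih =>
    have ht : (t2 a).length = (t1 a).length := by fin_cases a <;> rfl
    cases b <;> simp [tauAux, ih, ht]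

lemma length_tauList_gList_append (u v : Word) :
    (tauList (gList (u ++ v))).length =
      (tauList (gList u)).length + (tauList (gList v)).length := by
  simp only [tauList, gList, length_tauAux, List.flatMap_append, List.map_append, List.sum_append]

theorem fList_iterate_bounds (L : Word → ℕ) (hL : ∀ u v, L (u ++ v) = L u + L v)
    (h : L [2] ≤ L [0] ∧ L [0] ≤ L [1] ∧ L [1] ≤ 2 * L [2]) (n : ℕ) :
    L (fList^[n] [2]) ≤ L (fList^[n] [0]) ∧ L (fList^[n] [0]) ≤ L (fList^[n] [1]) ∧
      L (fList^[n] [1]) ≤ 2 * L (fList^[n] [2]) := by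
  induction n with
  | zero => exact h
  | succ n ih =>
    have h0 : fList [0] = [0] ++ [1] := rfl
    have h1 : fList [1] = [0] ++ ([2] ++ [2]) := rfl
    have h2 : fList [2] = [0] ++ [2] := rfl
    simp only [Function.iterate_succ_apply, h0, h1, h2, fList_iterate_append, hL]
    omega

/-- Length comparisons: for all `n ≥ 0`,
`|fⁿ(2)| ≤ |fⁿ(0)| ≤ |fⁿ(1)| ≤ 2|fⁿ(2)|` and
`|τ(g(fⁿ(2)))| ≤ |τ(g(fⁿ(0)))| ≤ |τ(g(fⁿ(1)))| ≤ 2|τ(g(fⁿ(2)))|`. -/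
theorem length_comparison (n : ℕ) :
    ((fList^[n] [2]).length ≤ (fList^[n] [0]).length ∧
      (fList^[n] [0]).length ≤ (fList^[n] [1]).length ∧
      (fList^[n] [1]).length ≤ 2 * (fList^[n] [2]).length) ∧
    ((tauList (gList (fList^[n] [2]))).length ≤ (tauList (gList (fList^[n] [0]))).length ∧
      (tauList (gList (fList^[n] [0]))).length ≤ (tauList (gList (fList^[n] [1]))).length ∧
      (tauList (gList (fList^[n] [1]))).length ≤
        2 * (tauList (gList (fList^[n] [2]))).length) :=
  ⟨fList_iterate_bounds List.length (fun _ _ => List.length_append) (by decide) n,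
    fList_iterate_bounds (fun w => (tauList (gList w)).length) length_tauList_gList_append
      (by decide) n⟩
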